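/- arXiv:2601.08796 — 4 statements merged into one kernel-verified Lean document; each statement's English description precedes it below -/
import Mathlib

section
/- Let $\{a_n\}_{n\in\mathbb{Z}}$ satisfy $0<a_-\le a_n\le a_+<\infty$, and let $T_n^z$ be the transfer matrices of the divergence-gradient Jacobi operator. Suppose $\|T_m^0(S^j)\| \le C_1 m$ for all shifts $j$ and all $m\ge 1$, where $C_1 = 8a_+^2/a_-$. Then for every $z\in\mathbb{C}$ and $n\ge 1$, $\|T_n^z\| \le C_1 n\, e^{C_2 n^2 |z|}$, where $C_2 = 8a_+^2/a_-^2$. -/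
open Matrix Finset

attribute [local instance] Matrix.normedAddCommGroup

/-!
Write `A_j^z = A_j^0 - (z / a_j) E` with `E = diag(1, 0)`. Telescoping the product gives
`T_k^z = T_k^0 - ∑_{i<k} T_{k-1-i}^0(S^{i+1}) (z / a_i) E T_i^z`, and since `E` has a single
nonzero entry, `‖P E Q‖ ≤ ‖P‖ ‖Q‖` for the entrywise sup norm, even though that norm is not
submultiplicative. With `K = C₁ n` bounding every `‖T_m^0(S^j)‖`, `m ≤ n` (for `m = 0` because
`C₁ ≥ ‖A_0^0‖ ≥ 1`), the norms `u_k = ‖T_k^z‖` satisfy `u_k ≤ K + (|z| K / a₋) ∑_{i<k} u_i`,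
hence `u_n ≤ K (1 + |z| K / a₋)^n ≤ K e^{n² C₂ |z|}`.
-/

/-- `shiftedProd B j m = B (j + m - 1) * ⋯ * B j`, the transfer matrix `T_m(S^j)`. -/
def shiftedProd {R : Type*} [Monoid R] (B : ℤ → R) (j : ℤ) : ℕ → R
  | 0 => 1
  | m + 1 => B (j + m) * shiftedProd B j m

section Ring

variable {R : Type*} [Ring R]

theorem eq_shiftedProd {B : ℤ → R} {T : ℤ → ℕ → R} (h0 : ∀ j, T j 0 = 1)
    (hs : ∀ j m, T j (m + 1) = B (j + m) * T j m) (j : ℤ) (m : ℕ) :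
    T j m = shiftedProd B j m := by
  induction m with
  | zero => exact h0 j
  | succ m ih => rw [hs, ih]; rfl

theorem mul_shiftedProd_of_lt (B : ℤ → R) (j : ℤ) {k m : ℕ} (hk : k < m) :
    B (j + m) * shiftedProd B (j + k + 1) (m - 1 - k) = shiftedProd B (j + k + 1) (m - k) := by
  obtain ⟨r, rfl⟩ := Nat.exists_eq_add_of_lt hk
  rw [show k + r + 1 - 1 - k = r by omega, show k + r + 1 - k = r + 1 by omega, shiftedProd]
  congr 2
  push_cast
  ring

theorem shiftedProd_sub (B D : ℤ → R) (j : ℤ) (m : ℕ) :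
    shiftedProd (fun i => B i - D i) j m = shiftedProd B j m -
      ∑ k ∈ range m, shiftedProd B (j + k + 1) (m - 1 - k) * D (j + k) *
        shiftedProd (fun i => B i - D i) j k := by
  induction m with
  | zero => simp [shiftedProd]
  | succ m ih =>
    rw [shiftedProd, sub_mul]
    nth_rw 1 [ih]
    rw [mul_sub, mul_sum, sum_range_succ, shiftedProd]
    simp only [Nat.add_sub_cancel, Nat.sub_self, shiftedProd, one_mul, ← mul_assoc]
    rw [sum_congr rfl fun k hk => by rw [mul_shiftedProd_of_lt B j (mem_range.mp hk)]]
    abel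

end Ring

theorem norm_mul_single_mul_le {l m n p α : Type*} [Fintype l] [Fintype m] [Fintype n]
    [Fintype p] [DecidableEq m] [DecidableEq n] [NormedRing α]
    (M : Matrix l m α) (i : m) (j : n) (c : α) (N : Matrix n p α) :
    ‖M * single i j c * N‖ ≤ ‖M‖ * ‖c‖ * ‖N‖ := by
  refine (norm_le_iff (by positivity)).2 fun r s => ?_
  have hentry : (M * single i j c * N) r s = M r i * c * N j s := by
    simp [mul_apply, single, ite_and]
  rw [hentry]
  refine (norm_mul_le _ _).trans (mul_le_mul ((norm_mul_le _ _).trans ?_)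
    (norm_entry_le_entrywise_sup_norm N) (norm_nonneg _) (by positivity))
  exact mul_le_mul_of_nonneg_right (norm_entry_le_entrywise_sup_norm M) (norm_nonneg _)

theorem le_mul_one_add_pow_of_le_add_mul_sum {u : ℕ → ℝ} {K c : ℝ} (hc : 0 ≤ c) {N : ℕ}
    (hu : ∀ k ≤ N, u k ≤ K + c * ∑ i ∈ range k, u i) : ∀ k ≤ N, u k ≤ K * (1 + c) ^ k := by
  intro k
  induction k using Nat.strong_induction_on with
  | _ k ih =>
    intro hk
    calc u k ≤ K + c * ∑ i ∈ range k, u i := hu k hk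
      _ ≤ K + c * ∑ i ∈ range k, K * (1 + c) ^ i := by
        gcongr with i hi
        exact ih i (mem_range.mp hi) ((mem_range.mp hi).le.trans hk)
      _ = K * (1 + c) ^ k := by
        rw [← mul_sum]
        linear_combination K * geom_sum_mul (1 + c) k

theorem norm_shiftedProd_sub_single_le {n α : Type*} [Fintype n] [DecidableEq n] [NormedRing α]
    {B : ℤ → Matrix n n α} {c : ℤ → α} {K δ : ℝ} {N : ℕ}
    (hB : ∀ i m, m ≤ N → ‖shiftedProd B i m‖ ≤ K) (hc : ∀ i, ‖c i‖ ≤ δ) (p q : n) (j : ℤ) :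
    ‖shiftedProd (fun i => B i - single p q (c i)) j N‖ ≤ K * (1 + δ * K) ^ N := by
  have hK : 0 ≤ K := (norm_nonneg _).trans (hB j 0 N.zero_le)
  have hδ : 0 ≤ δ := (norm_nonneg _).trans (hc 0)
  refine le_mul_one_add_pow_of_le_add_mul_sum
    (u := fun k => ‖shiftedProd (fun i => B i - single p q (c i)) j k‖) (mul_nonneg hδ hK)
    (fun k hk => ?_) N le_rfl
  rw [shiftedProd_sub, mul_sum]
  refine (norm_sub_le _ _).trans (add_le_add (hB j k hk)
    ((norm_sum_le _ _).trans (sum_le_sum fun i _ => ?_)))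
  calc _ ≤ ‖shiftedProd B (j + i + 1) (k - 1 - i)‖ * ‖c (j + i)‖ *
        ‖shiftedProd (fun i => B i - single p q (c i)) j i‖ := norm_mul_single_mul_le ..
    _ ≤ K * δ * ‖shiftedProd (fun i => B i - single p q (c i)) j i‖ := by
        gcongr
        · exact hB _ _ (by omega)
        · exact hc _
    _ = _ := by ring

theorem one_le_norm_inv_smul_transfer {𝕜 : Type*} [NormedField 𝕜] {a : 𝕜} (ha : a ≠ 0) (b : 𝕜) :
    1 ≤ ‖a⁻¹ • !![b, -a ^ 2; 1, 0]‖ := by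
  set M : Matrix (Fin 2) (Fin 2) 𝕜 := a⁻¹ • !![b, -a ^ 2; 1, 0]
  have h01 : ‖a‖ ≤ ‖M‖ := by
    simpa [M, sq, ha] using norm_entry_le_entrywise_sup_norm M (i := 0) (j := 1)
  have h10 : ‖a‖⁻¹ ≤ ‖M‖ := by
    simpa [M] using norm_entry_le_entrywise_sup_norm M (i := 1) (j := 0)
  rcases le_total 1 ‖a‖ with h | h
  · exact h.trans h01
  · exact ((one_le_inv₀ (norm_pos_iff.2 ha)).2 h).trans h10

theorem inv_smul_transfer_sub {K : Type*} [Field K] (x y w z : K) :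
    x⁻¹ • !![y - z, w; 1, 0] = x⁻¹ • !![y, w; 1, 0] - single 0 0 (z / x) := by
  ext r s
  fin_cases r <;> fin_cases s <;> simp [div_eq_inv_mul, mul_sub]

/-- Telescoping bound: if all shifted transfer-matrix products at energy `0` grow at most
linearly, `‖T_m^0(S^j)‖ ≤ C₁ m` with `C₁ = 8 a₊²/a₋`, then for every complex energy `z`,
`‖T_n^z‖ ≤ C₁ n e^{C₂ n² |z|}` with `C₂ = 8 a₊²/a₋²`. -/
theorem transfer_matrix_exp_bound
    (a : ℤ → ℝ) (am ap : ℝ) (ham : 0 < am)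
    (hbd : ∀ n : ℤ, am ≤ a n ∧ a n ≤ ap)
    (A : ℂ → ℤ → Matrix (Fin 2) (Fin 2) ℂ)
    (hA : ∀ (z : ℂ) (j : ℤ),
      A z j = ((a j : ℂ))⁻¹ • !![(a (j + 1) : ℂ) + (a j : ℂ) - z, -(a j : ℂ) ^ 2; 1, 0])
    -- `T z j m` is the product `A_{j+m-1}^z ⋯ A_j^z` (the shifted transfer matrix `T_m^z(S^j)`)
    (T : ℂ → ℤ → ℕ → Matrix (Fin 2) (Fin 2) ℂ)
    (hT0 : ∀ (z : ℂ) (j : ℤ), T z j 0 = 1)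
    (hTs : ∀ (z : ℂ) (j : ℤ) (m : ℕ), T z j (m + 1) = A z (j + m) * T z j m)
    (hlin : ∀ (j : ℤ) (m : ℕ), 1 ≤ m → ‖T 0 j m‖ ≤ (8 * ap ^ 2 / am) * m) :
    ∀ (z : ℂ) (n : ℕ), 1 ≤ n →
      ‖T z 0 n‖ ≤ (8 * ap ^ 2 / am) * n *
        Real.exp ((8 * ap ^ 2 / am ^ 2) * n ^ 2 * ‖z‖) := by
  intro z n hn
  set C₁ := 8 * ap ^ 2 / am
  have ha : ∀ j, 0 < a j := fun j => ham.trans_le (hbd j).1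
  have hT : ∀ w, T w = shiftedProd (A w) := fun w => funext₂ (eq_shiftedProd (hT0 w) (hTs w))
  have hAz : A z = fun j => A 0 j - single 0 0 (z / a j) := funext fun j => by
    rw [hA, hA, sub_zero, inv_smul_transfer_sub]
  have hC₁ : 1 ≤ C₁ := by
    have h := hlin 0 1 le_rfl
    rw [hT, Nat.cast_one, mul_one, shiftedProd, shiftedProd, mul_one, hA] at h
    exact (one_le_norm_inv_smul_transfer (by exact_mod_cast (ha _).ne') _).trans h
  have hB : ∀ i m, m ≤ n → ‖shiftedProd (A 0) i m‖ ≤ C₁ * n := by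
    intro i m hm
    rcases m.eq_zero_or_pos with rfl | hm0
    · simpa [shiftedProd] using one_le_mul_of_one_le_of_one_le hC₁ (by exact_mod_cast hn)
    · rw [← hT]
      exact (hlin i m hm0).trans (by gcongr)
  have hc : ∀ j, ‖z / a j‖ ≤ ‖z‖ / am := fun j => by
    rw [norm_div, Complex.norm_real, Real.norm_of_nonneg (ha j).le]
    gcongr
    exact (hbd j).1
  set x := ‖z‖ / am * (C₁ * n)
  calc ‖T z 0 n‖ ≤ C₁ * n * (1 + x) ^ n := by
        rw [hT, hAz]
        exact norm_shiftedProd_sub_single_le hB hc 0 0 0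
    _ ≤ C₁ * n * Real.exp (n * x) := by
        rw [Real.exp_nat_mul]
        gcongr
        linarith [Real.add_one_le_exp x]
    _ = C₁ * n * Real.exp ((8 * ap ^ 2 / am ^ 2) * n ^ 2 * ‖z‖) := by
        congr 2
        simp only [x, C₁]
        field_simp
end

section
/- Let $\mu$ be a Borel probability measure on $\mathbb{R}$ with Borel transform $B_\mu(z) = \int \frac{d\mu(E)}{E-z}$. Suppose there are $0<m\le 1$ and $C_1>0$ such that $\mathrm{Im}\, B_{\mu}(E_c + i s) \le C_1 s^{m-1}$ for all $s > 0$. Then for any $\delta > 0$ and $E_1 > 0$, $\int_{E_c - E_1}^{E_c + E_1} \mathrm{Im}\, B_{\mu}(E + i\delta)\, dE \le 2\pi C_1 E_1^{m}$. -/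
open MeasureTheory Complex
open scoped Real

/-!
Write `P_y(t) = lorentzian y t = y / (t² + y²) = Im (t - iy)⁻¹`. By Fubini the integral equals
`∫ (∫_{Ec-E1}^{Ec+E1} P_δ(x - E) dE) dμ(x)`, and the inner integral is the angle
`arctan ((E1 - t)/δ) + arctan ((E1 + t)/δ)`, `t = Ec - x`, under which the interval is seen from
`x + iδ`. The arctangent addition formula and `arctan X ≤ π X / (1 + X)` bound this angle by
`2π E1 P_{E1+δ}(x - Ec)`, so the integral is at most
`2π E1 Im B_μ(Ec + i(E1 + δ)) ≤ 2π E1 C1 (E1 + δ)^(m-1) ≤ 2π C1 E1^m`.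
-/

theorem Real.arctan_le_self {x : ℝ} (hx : 0 ≤ x) : Real.arctan x ≤ x := by
  simpa using le_tan (Real.arctan_nonneg.2 hx) (Real.arctan_lt_pi_div_two x)

theorem Real.arctan_le_pi_mul_div_one_add {x : ℝ} (hx : 0 ≤ x) :
    Real.arctan x ≤ π * x / (1 + x) := by
  rw [le_div_iff₀ (by linarith)]
  have := pi_gt_three
  rcases le_or_gt x (π - 1) with h | h
  · nlinarith [Real.arctan_le_self hx]
  · nlinarith [Real.arctan_lt_pi_div_two x]

noncomputable def lorentzian (y t : ℝ) : ℝ := y / (t ^ 2 + y ^ 2)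

theorem lorentzian_nonneg {y : ℝ} (hy : 0 ≤ y) (t : ℝ) : 0 ≤ lorentzian y t := by
  unfold lorentzian; positivity

theorem lorentzian_le_inv {y : ℝ} (hy : 0 < y) (t : ℝ) : lorentzian y t ≤ y⁻¹ := by
  rw [lorentzian, div_le_iff₀ (by positivity)]
  field_simp
  nlinarith [sq_nonneg t]

theorem lorentzian_neg (y t : ℝ) : lorentzian y (-t) = lorentzian y t := by
  simp [lorentzian]

theorem arctan_add_arctan_le_lorentzian {δ r : ℝ} (hδ : 0 < δ) (hr : 0 < r) (t : ℝ) :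
    Real.arctan ((r - t) / δ) + Real.arctan ((r + t) / δ)
      ≤ 2 * π * r * lorentzian (r + δ) t := by
  have hQ : 0 < t ^ 2 + (r + δ) ^ 2 := by positivity
  rw [lorentzian, ← mul_div_assoc, le_div_iff₀ hQ]
  rcases le_or_gt (t ^ 2 + δ ^ 2) (r ^ 2) with hD | hD
  · -- the left-hand side is below `π`, the right-hand side at least `π`
    nlinarith [Real.arctan_lt_pi_div_two ((r - t) / δ),
      Real.arctan_lt_pi_div_two ((r + t) / δ), Real.pi_pos]
  · -- the angle is acute, with tangent `X`
    have huv : (r - t) / δ * ((r + t) / δ) < 1 := by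
      rw [div_mul_div_comm, div_lt_one (by positivity)]
      nlinarith
    set X := 2 * r * δ / (t ^ 2 + δ ^ 2 - r ^ 2) with hX
    have hsum : (r - t) / δ + (r + t) / δ = X * (1 - (r - t) / δ * ((r + t) / δ)) := by
      rw [hX]; field_simp; ring
    rw [Real.arctan_add huv, hsum, mul_div_cancel_right₀ _ (by linarith)]
    have hX0 : 0 ≤ X := by positivity
    have hXD : X * (t ^ 2 + δ ^ 2 - r ^ 2) = 2 * r * δ := by
      rw [hX]; field_simp
    have := Real.arctan_le_pi_mul_div_one_add hX0
    rw [le_div_iff₀ (by linarith)] at this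
    nlinarith [Real.pi_pos]

theorem continuous_lorentzian {y : ℝ} (hy : y ≠ 0) : Continuous (lorentzian y) :=
  continuous_const.div (by fun_prop) fun t => by positivity

theorem norm_lorentzian_le_inv {y : ℝ} (hy : 0 < y) (t : ℝ) : ‖lorentzian y t‖ ≤ y⁻¹ :=
  (Real.norm_of_nonneg (lorentzian_nonneg hy.le t)).trans_le (lorentzian_le_inv hy t)

theorem integral_lorentzian_sub {y : ℝ} (hy : 0 < y) (x a b : ℝ) :
    ∫ E in a..b, lorentzian y (x - E)
      = Real.arctan ((b - x) / y) - Real.arctan ((a - x) / y) := by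
  refine intervalIntegral.integral_eq_sub_of_hasDerivAt
    (f := fun E => Real.arctan ((E - x) / y)) (fun E _ => ?_)
    (((continuous_lorentzian hy.ne').comp (continuous_sub_left x)).intervalIntegrable _ _)
  refine (((hasDerivAt_id' E).sub_const x).div_const y).arctan.congr_deriv ?_
  simp only [lorentzian]
  field_simp
  ring

theorem integral_lorentzian_le {δ r : ℝ} (hδ : 0 < δ) (hr : 0 < r) (c x : ℝ) :
    ∫ E in c - r..c + r, lorentzian δ (x - E) ≤ 2 * π * r * lorentzian (r + δ) (x - c) := by
  rw [integral_lorentzian_sub hδ, ← lorentzian_neg, neg_sub,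
    show (c - r - x) / δ = -((r - (c - x)) / δ) by ring,
    show (c + r - x) / δ = (r + (c - x)) / δ by ring, Real.arctan_neg, sub_neg_eq_add, add_comm]
  exact arctan_add_arctan_le_lorentzian hδ hr (c - x)

theorem im_inv_ofReal_sub (x c y : ℝ) :
    (((x : ℂ) - (c + y * I))⁻¹).im = lorentzian y (x - c) := by
  simp [lorentzian, Complex.inv_im, Complex.normSq_apply]
  ring

noncomputable def borelTransform (μ : Measure ℝ) (z : ℂ) : ℂ :=
  ∫ x : ℝ, ((x : ℂ) - z)⁻¹ ∂μ

section BorelTransform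

variable (μ : Measure ℝ) [IsFiniteMeasure μ]

theorem integrable_lorentzian_sub {y : ℝ} (hy : 0 < y) (c : ℝ) :
    Integrable (fun x => lorentzian y (x - c)) μ :=
  .of_bound ((continuous_lorentzian hy.ne').comp (continuous_sub_right c)).aestronglyMeasurable
    y⁻¹ (ae_of_all _ fun _ => norm_lorentzian_le_inv hy _)

theorem integrable_inv_ofReal_sub {z : ℂ} (hz : z.im ≠ 0) :
    Integrable (fun x : ℝ => ((x : ℂ) - z)⁻¹) μ := by
  have hne (x : ℝ) : (x : ℂ) - z ≠ 0 := fun h => hz (by simpa using congrArg Complex.im h)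
  refine .of_bound ((continuous_ofReal.sub continuous_const).inv₀ hne).aestronglyMeasurable
    |z.im|⁻¹ (ae_of_all _ fun x => ?_)
  rw [norm_inv]
  refine inv_anti₀ (abs_pos.2 hz) ?_
  simpa using abs_im_le_norm ((x : ℂ) - z)

theorem im_borelTransform {y : ℝ} (hy : y ≠ 0) (c : ℝ) :
    (borelTransform μ (c + y * I)).im = ∫ x, lorentzian y (x - c) ∂μ := by
  rw [borelTransform, ← RCLike.im_to_complex,
    ← integral_im (integrable_inv_ofReal_sub μ (by simpa using hy))]
  simp only [RCLike.im_to_complex, im_inv_ofReal_sub]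

theorem integral_im_borelTransform_eq {δ : ℝ} (hδ : 0 < δ) {a b : ℝ} (hab : a ≤ b) :
    ∫ E in a..b, (borelTransform μ (E + δ * I)).im
      = ∫ x, (∫ E in a..b, lorentzian δ (x - E)) ∂μ := by
  have hint : Integrable (Function.uncurry fun E x => lorentzian δ (x - E))
      ((volume.restrict (Set.Ioc a b)).prod μ) :=
    .of_bound ((continuous_lorentzian hδ.ne').comp (by fun_prop)).aestronglyMeasurable δ⁻¹
      (ae_of_all _ fun _ => norm_lorentzian_le_inv hδ _)
  simp only [im_borelTransform μ hδ.ne', intervalIntegral.integral_of_le hab]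
  exact integral_integral_swap hint

theorem integral_im_borelTransform_le {δ r : ℝ} (hδ : 0 < δ) (hr : 0 < r) (c : ℝ) :
    ∫ E in c - r..c + r, (borelTransform μ (E + δ * I)).im
      ≤ 2 * π * r * (borelTransform μ (c + ((r + δ : ℝ) : ℂ) * I)).im := by
  rw [integral_im_borelTransform_eq μ hδ (by linarith),
    im_borelTransform μ (y := r + δ) (by positivity), ← integral_const_mul]
  refine integral_mono_of_nonneg (ae_of_all _ fun x => ?_)
    ((integrable_lorentzian_sub μ (by positivity) c).const_mul _)
    (ae_of_all _ fun x => integral_lorentzian_le hδ hr c x)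
  exact intervalIntegral.integral_nonneg (by linarith) fun E _ => lorentzian_nonneg hδ.le _

end BorelTransform

theorem integral_imaginary_borel_transform_bound_general
    (μ : Measure ℝ) [IsProbabilityMeasure μ]
    (m C1 Ec : ℝ) (hm1 : m ≤ 1) (hC1 : 0 < C1)
    (hIm : ∀ s : ℝ, 0 < s →
      (∫ E : ℝ, ((E : ℂ) - ((Ec : ℂ) + s * Complex.I))⁻¹ ∂μ).im ≤ C1 * s ^ (m - 1)) :
    ∀ δ E1 : ℝ, 0 < δ → 0 < E1 →
      (∫ E in (Ec - E1)..(Ec + E1),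
          (∫ x : ℝ, ((x : ℂ) - ((E : ℂ) + δ * Complex.I))⁻¹ ∂μ).im)
        ≤ 2 * Real.pi * C1 * E1 ^ m := by
  intro δ E1 hδ hE1
  have hpow : (E1 + δ) ^ (m - 1) ≤ E1 ^ (m - 1) :=
    Real.rpow_le_rpow_of_nonpos hE1 (by linarith) (by linarith)
  calc _ ≤ 2 * π * E1 * (borelTransform μ (Ec + ((E1 + δ : ℝ) : ℂ) * I)).im :=
        integral_im_borelTransform_le μ hδ hE1 Ec
    _ ≤ 2 * π * E1 * (C1 * (E1 + δ) ^ (m - 1)) := by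
        gcongr
        exact hIm _ (by positivity)
    _ ≤ 2 * π * E1 * (C1 * E1 ^ (m - 1)) := by gcongr
    _ = 2 * π * C1 * E1 ^ m := by
        rw [Real.rpow_sub_one hE1.ne']
        field_simp

/-- If `Im B_μ(E_c + is) ≤ C₁ s^{m-1}` for all `s > 0`, then for any `δ > 0` and `E₁ > 0`,
`∫_{E_c-E₁}^{E_c+E₁} Im B_μ(E + iδ) dE ≤ 2π C₁ E₁^m`. -/
theorem integral_imaginary_borel_transform_bound
    (μ : Measure ℝ) [IsProbabilityMeasure μ]
    (m C1 Ec : ℝ) (hm0 : 0 < m) (hm1 : m ≤ 1) (hC1 : 0 < C1)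
    (hIm : ∀ s : ℝ, 0 < s →
      (∫ E : ℝ, ((E : ℂ) - ((Ec : ℂ) + s * Complex.I))⁻¹ ∂μ).im ≤ C1 * s ^ (m - 1)) :
    ∀ δ E1 : ℝ, 0 < δ → 0 < E1 →
      (∫ E in (Ec - E1)..(Ec + E1),
          (∫ x : ℝ, ((x : ℂ) - ((E : ℂ) + δ * Complex.I))⁻¹ ∂μ).im)
        ≤ 2 * Real.pi * C1 * E1 ^ m :=
  integral_imaginary_borel_transform_bound_general μ m C1 Ec hm1 hC1 hIm
end

section
/- Let $b_j$ be real numbers with $0 < b_- \le b_j \le b_+$ for all $j$, and for $z = E + i\delta \in \mathbb{C}$ consider $B_j^z = \begin{pmatrix} 2 - z b_j & -1 \\ 1 & 0 \end{pmatrix}$ (with $b_j$ playing the role of $1/a_j$), and $F_n^z = B_{n-1}^z \cdots B_0^z$. There exists $0 < E_0 < 1$ such that if $-E_0 < E < 0$, then for every $n \ge 1$ and every $\delta\in\mathbb{R}$, $\log\|F_n^z\|_{\infty} \ge \frac{n}{2}\sqrt{-E\, b_-}$, where $\|\cdot\|_\infty$ is the entrywise maximum norm. -/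
open Matrix

attribute [local instance] Matrix.normedAddCommGroup

/-!
Write `u n` for the `(1,0)` entry of `F_n`, so that `u 0 = 0`, `u 1 = 1` and
`u (n + 2) = a_n u (n + 1) - u n` with `a_n = 2 - z b_n`. For `E < 0` one has
`‖a_n‖ ≥ Re a_n ≥ 2 + t²` with `t = √(-E b₋)`, and then the ratio bound
`‖u (n + 1)‖ ≥ (1 + t) ‖u n‖` propagates along the recurrence. Hence
`‖F_n‖ ≥ ‖u (n + 1)‖ ≥ (1 + t)ⁿ`, and `log (1 + t) ≥ t / 2` as long as `t ≤ 1`.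
-/

lemma half_le_log_one_add {t : ℝ} (ht₀ : 0 ≤ t) (ht₁ : t ≤ 1) : t / 2 ≤ Real.log (1 + t) :=
  calc t / 2 ≤ 1 - (1 + t)⁻¹ := by
        have : (1 + t)⁻¹ ≤ 1 - t / 2 := by
          rw [inv_le_iff_one_le_mul₀ (by linarith)]; nlinarith
        linarith
    _ ≤ Real.log (1 + t) := Real.one_sub_inv_le_log_of_pos (by linarith)

lemma two_add_neg_re_mul_le_norm_two_sub_mul {z : ℂ} (hz : z.re ≤ 0) {b₀ b : ℝ} (hb : b₀ ≤ b) :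
    2 + -z.re * b₀ ≤ ‖2 - z * b‖ :=
  calc 2 + -z.re * b₀ ≤ 2 - z.re * b := by nlinarith
    _ = (2 - z * b).re := by simp
    _ ≤ ‖2 - z * b‖ := Complex.re_le_norm _

section ThreeTermRecurrence

variable {𝕜 : Type*} [NormedDivisionRing 𝕜] {t : ℝ}

lemma one_add_mul_norm_le_norm_mul_sub (ht : 0 ≤ t) {a x y : 𝕜} (ha : 2 + t ^ 2 ≤ ‖a‖)
    (hxy : (1 + t) * ‖x‖ ≤ ‖y‖) : (1 + t) * ‖y‖ ≤ ‖a * y - x‖ := by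
  have hdiff : ‖a‖ * ‖y‖ - ‖x‖ ≤ ‖a * y - x‖ := norm_mul a y ▸ norm_sub_norm_le (a * y) x
  -- `(1 + t) (1 - t + t²) = 1 + t³ ≥ 1`, so `‖x‖ ≤ ‖y‖ / (1 + t) ≤ (1 - t + t²) ‖y‖`.
  have hx : ‖x‖ ≤ (1 - t + t ^ 2) * ‖y‖ := by
    nlinarith [mul_nonneg (pow_nonneg ht 3) (norm_nonneg y), norm_nonneg x]
  nlinarith [mul_le_mul_of_nonneg_right ha (norm_nonneg y)]

lemma one_add_mul_norm_le_norm_succ_of_recurrence (ht : 0 ≤ t) {a u : ℕ → 𝕜}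
    (ha : ∀ n, 2 + t ^ 2 ≤ ‖a n‖) (hu : ∀ n, u (n + 2) = a n * u (n + 1) - u n)
    (h0 : (1 + t) * ‖u 0‖ ≤ ‖u 1‖) (n : ℕ) : (1 + t) * ‖u n‖ ≤ ‖u (n + 1)‖ := by
  induction n with
  | zero => exact h0
  | succ n ih => rw [hu]; exact one_add_mul_norm_le_norm_mul_sub ht (ha n) ih

lemma one_add_pow_le_norm_of_transfer (ht : 0 ≤ t) {a : ℕ → 𝕜} (ha : ∀ n, 2 + t ^ 2 ≤ ‖a n‖)
    {M : ℕ → Matrix (Fin 2) (Fin 2) 𝕜} (hM0 : M 0 = 1)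
    (hM : ∀ n, M (n + 1) = !![a n, -1; 1, 0] * M n) (n : ℕ) : (1 + t) ^ n ≤ ‖M n‖ := by
  set u : ℕ → 𝕜 := fun n ↦ M n 1 0
  have hu_succ (n : ℕ) : u (n + 1) = M n 0 0 := by simp [u, hM, Matrix.mul_apply]
  have hu_rec (n : ℕ) : u (n + 2) = a n * u (n + 1) - u n := by
    simp [hu_succ, u, hM, Matrix.mul_apply, sub_eq_add_neg]
  have hu_one : u 1 = 1 := by simp [hu_succ, hM0]
  have hratio := one_add_mul_norm_le_norm_succ_of_recurrence ht ha hu_rec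
    (by simp [u, hM0, hu_one])
  calc (1 + t) ^ n = (1 + t) ^ n * ‖u (0 + 1)‖ := by simp [hu_one]
    _ ≤ ‖u (n + 1)‖ := geom_le (u := fun k ↦ ‖u (k + 1)‖) (by linarith) n
        fun k _ ↦ hratio (k + 1)
    _ = ‖M n 0 0‖ := by rw [hu_succ]
    _ ≤ ‖M n‖ := norm_entry_le_entrywise_sup_norm _

lemma half_mul_le_log_norm_of_transfer (ht₀ : 0 ≤ t) (ht₁ : t ≤ 1) {a : ℕ → 𝕜}
    (ha : ∀ n, 2 + t ^ 2 ≤ ‖a n‖) {M : ℕ → Matrix (Fin 2) (Fin 2) 𝕜} (hM0 : M 0 = 1)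
    (hM : ∀ n, M (n + 1) = !![a n, -1; 1, 0] * M n) (n : ℕ) :
    (n : ℝ) / 2 * t ≤ Real.log ‖M n‖ :=
  calc (n : ℝ) / 2 * t = n * (t / 2) := by ring
    _ ≤ n * Real.log (1 + t) := by gcongr; exact half_le_log_one_add ht₀ ht₁
    _ = Real.log ((1 + t) ^ n) := (Real.log_pow (1 + t) n).symm
    _ ≤ Real.log ‖M n‖ :=
        Real.log_le_log (by positivity) (one_add_pow_le_norm_of_transfer ht₀ ha hM0 hM n)

end ThreeTermRecurrence

/-- Lower bound on harmonic-chain transfer matrices in the hyperbolic region: there is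
`0 < E₀ < 1` such that for `z = E + iδ` with `-E₀ < E < 0`, one has
`log ‖F_n^z‖ ≥ (n/2) √(-E b₋)` for every `n ≥ 1` (entrywise max norm). -/
theorem hyperbolic_lower_bound
    (b : ℕ → ℝ) (bm bp : ℝ) (hbm : 0 < bm)
    (hb : ∀ j, bm ≤ b j ∧ b j ≤ bp)
    (Bmat : ℂ → ℕ → Matrix (Fin 2) (Fin 2) ℂ)
    (hB : ∀ (z : ℂ) (j : ℕ), Bmat z j = !![2 - z * (b j : ℂ), -1; 1, 0])
    (F : ℂ → ℕ → Matrix (Fin 2) (Fin 2) ℂ)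
    (hF0 : ∀ z, F z 0 = 1) (hFs : ∀ z n, F z (n + 1) = Bmat z n * F z n) :
    ∃ E0 : ℝ, 0 < E0 ∧ E0 < 1 ∧
      ∀ (E δ : ℝ), -E0 < E → E < 0 → ∀ n : ℕ, 1 ≤ n →
        Real.log ‖F ((E : ℂ) + δ * Complex.I) n‖ ≥ (n : ℝ) / 2 * Real.sqrt (-E * bm) := by
  refine ⟨1 / (bm + 1), by positivity, (div_lt_one (by linarith)).2 (by linarith), ?_⟩
  intro E δ hE₀ hE n _
  set z : ℂ := E + δ * Complex.I
  have hz : z.re = E := by simp [z]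
  have hs₀ : 0 ≤ -E * bm := by nlinarith
  have hs₁ : -E * bm ≤ 1 := by
    have : -E < 1 / (bm + 1) := by linarith
    rw [lt_div_iff₀ (by linarith)] at this
    nlinarith
  have ha (j : ℕ) : 2 + √(-E * bm) ^ 2 ≤ ‖2 - z * b j‖ := by
    rw [Real.sq_sqrt hs₀, ← hz]
    exact two_add_neg_re_mul_le_norm_two_sub_mul (hz ▸ hE.le) (hb j).1
  exact half_mul_le_log_norm_of_transfer (Real.sqrt_nonneg _) (Real.sqrt_le_one.2 hs₁) ha
    (hF0 z) (fun j ↦ (hFs z j).trans (by rw [hB])) n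
end

section
/- Let $b_j$ be real numbers with $0 < b_j \le b_+$ for all $j$, let $x > 0$ be small, and let $P_n$ satisfy $P_{n+1} = (2 + x b_n)P_n - P_{n-1}$ with $P_0 = 1$, $P_{-1} = 0$. Then for $x$ sufficiently small (depending only on $b_+$), $P_n \le \frac{3}{\sqrt{x b_+}}\, e^{2n\sqrt{x b_+}}$ for all $n \ge 0$. -/
/-- Upper bound in the hyperbolic region: for `x` small (depending only on `b₊`), the
solution of `P_{n+1} = (2 + x bₙ) P_n - P_{n-1}`, `P₀ = 1`, `P₋₁ = 0` satisfies
`P_n ≤ (3/√(x b₊)) e^{2 n √(x b₊)}`. -/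
theorem hyperbolic_upper_bound :
    ∀ bp : ℝ, 0 < bp → ∃ x0 : ℝ, 0 < x0 ∧
      ∀ (b : ℕ → ℝ) (x : ℝ), (∀ j, 0 < b j ∧ b j ≤ bp) → 0 < x → x < x0 →
        ∀ P : ℕ → ℝ, P 0 = 1 → P 1 = 2 + x * b 0 →
          (∀ n : ℕ, P (n + 2) = (2 + x * b (n + 1)) * P (n + 1) - P n) →
          ∀ n : ℕ, P n ≤ 3 / Real.sqrt (x * bp) * Real.exp (2 * n * Real.sqrt (x * bp)) := by
  intro bp hbp
  refine ⟨1 / (16 * bp), by positivity, ?_⟩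
  intro b x hb hx hxx0 P hP0 hP1 hrec
  set xb := x * bp with hxbdef
  have hxb : 0 < xb := mul_pos hx hbp
  have hxb16 : xb < 1 / 16 := by
    have h := mul_lt_mul_of_pos_right hxx0 hbp
    have h2 : (1 / (16 * bp)) * bp = 1 / 16 := by
      field_simp
    rw [hxbdef]; linarith
  set u := Real.sqrt xb with hudef
  have hu0 : 0 < u := Real.sqrt_pos.mpr hxb
  have hu2 : u ^ 2 = xb := Real.sq_sqrt hxb.le
  have hu4 : u < 1 / 4 := by
    have h : u < Real.sqrt (1 / 16) := Real.sqrt_lt_sqrt hxb.le hxb16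
    have h2 : Real.sqrt (1 / 16 : ℝ) = 1 / 4 := by
      rw [show (1 / 16 : ℝ) = (1 / 4) ^ 2 by norm_num]
      exact Real.sqrt_sq (by norm_num)
    linarith
  set t := Real.exp (2 * u) with htdef
  have ht1 : 1 < t := by
    rw [htdef, show (1:ℝ) = Real.exp 0 by simp]
    exact Real.exp_lt_exp.mpr (by positivity)
  have ht0 : 0 < t := lt_trans one_pos ht1
  have htinv : t⁻¹ = Real.exp (-(2 * u)) := by rw [htdef, ← Real.exp_neg]
  have htinv0 : 0 < t⁻¹ := inv_pos.mpr ht0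
  -- sinh bounds
  have hsinh : 2 * u ≤ Real.exp u - Real.exp (-u) := by
    have h := Real.self_le_sinh_iff.mpr hu0.le
    rw [Real.sinh_eq] at h; linarith
  have hsinh2 : 4 * u ≤ t - t⁻¹ := by
    have h := Real.self_le_sinh_iff.mpr (by positivity : (0:ℝ) ≤ 2 * u)
    rw [Real.sinh_eq] at h
    rw [htinv, htdef]; linarith
  have htd : 0 < t - t⁻¹ := lt_of_lt_of_le (by positivity : (0:ℝ) < 4 * u) hsinh2
  have hkey : 2 + xb ≤ t + t⁻¹ := by
    have e1 : Real.exp u * Real.exp u = t := by rw [htdef, ← Real.exp_add]; ring_nf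
    have e2 : Real.exp (-u) * Real.exp (-u) = t⁻¹ := by
      rw [htinv, ← Real.exp_add]; ring_nf
    have e3 : Real.exp u * Real.exp (-u) = 1 := by rw [← Real.exp_add]; simp
    have hpos : (0:ℝ) ≤ 2 * u := by positivity
    have hmul : (2 * u) * (2 * u) ≤ (Real.exp u - Real.exp (-u)) * (Real.exp u - Real.exp (-u)) :=
      mul_le_mul hsinh hsinh hpos (by linarith)
    nlinarith [hmul, e1, e2, e3, hu2, hxb]
  -- bounds on x * b j
  have hbx : ∀ j, 0 ≤ x * b j := fun j => (mul_pos hx (hb j).1).le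
  have hbxp : ∀ j, x * b j ≤ xb := fun j => by
    have h := (hb j).2
    rw [hxbdef]
    nlinarith
  -- monotonicity
  have hmono : ∀ n, 1 ≤ P n ∧ P n ≤ P (n + 1) := by
    intro n
    induction n with
    | zero =>
      constructor
      · exact hP0.ge
      · rw [hP0, hP1]; linarith [hbx 0]
    | succ n ih =>
      have h1 : 1 ≤ P (n + 1) := le_trans ih.1 ih.2
      refine ⟨h1, ?_⟩
      rw [hrec n]
      nlinarith [hbx (n + 1), ih.2, h1]
  -- difference bound
  have hD : ∀ n, P (n + 1) - t * P n ≤ 2 * (t⁻¹) ^ n := by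
    intro n
    induction n with
    | zero =>
      rw [hP0, hP1]
      have h := hbxp 0
      simp only [pow_zero, mul_one]
      nlinarith
    | succ n ih =>
      have hq : (1:ℝ) ≤ P (n + 1) := (hmono (n + 1)).1
      rw [hrec n]
      have h2 : (2 + x * b (n + 1)) * P (n + 1) ≤ (t + t⁻¹) * P (n + 1) := by
        apply mul_le_mul_of_nonneg_right _ (by linarith)
        have := hbxp (n + 1); linarith
      have h3 : t⁻¹ * (P (n + 1) - t * P n) ≤ t⁻¹ * (2 * (t⁻¹) ^ n) :=
        mul_le_mul_of_nonneg_left ih htinv0.le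
      have h4 : t⁻¹ * (P (n + 1) - t * P n) = t⁻¹ * P (n + 1) - P n := by
        field_simp
      have h5 : t⁻¹ * (2 * (t⁻¹) ^ n) = 2 * (t⁻¹) ^ (n + 1) := by ring
      rw [h4, h5] at h3
      linarith
  -- closed form bound
  set B : ℝ := -2 / (t - t⁻¹) with hB
  set A : ℝ := 1 - B with hA'
  have hBd : B * (t - t⁻¹) = -2 := by
    rw [hB]; exact div_mul_cancel₀ _ htd.ne'
  have hBeq : B * t⁻¹ = B * t + 2 := by linear_combination -hBd
  have hBneg : B ≤ 0 := by
    rw [hB]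
    apply div_nonpos_of_nonpos_of_nonneg (by norm_num) htd.le
  have hAB : ∀ n, P n ≤ A * t ^ n + B * (t⁻¹) ^ n := by
    intro n
    induction n with
    | zero =>
      rw [hP0, hA']
      simp
    | succ n ih =>
      have step : P (n + 1) ≤ t * P n + 2 * (t⁻¹) ^ n := by linarith [hD n]
      have h6 : t * P n ≤ t * (A * t ^ n + B * (t⁻¹) ^ n) :=
        mul_le_mul_of_nonneg_left ih ht0.le
      have hrw : B * (t⁻¹) ^ (n + 1) = (B * t + 2) * (t⁻¹) ^ n := by
        rw [pow_succ, show B * ((t⁻¹) ^ n * t⁻¹) = (B * t⁻¹) * (t⁻¹) ^ n by ring, hBeq]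
      calc P (n + 1) ≤ t * P n + 2 * (t⁻¹) ^ n := step
        _ ≤ t * (A * t ^ n + B * (t⁻¹) ^ n) + 2 * (t⁻¹) ^ n := by linarith
        _ = A * t ^ (n + 1) + (B * t + 2) * (t⁻¹) ^ n := by ring
        _ = A * t ^ (n + 1) + B * (t⁻¹) ^ (n + 1) := by rw [hrw]
  -- A bound
  have hAbound : A ≤ 3 / u := by
    have hAeq : A = 1 + 2 / (t - t⁻¹) := by rw [hA', hB]; ring
    have h7 : 2 / (t - t⁻¹) ≤ 1 / (2 * u) := by
      rw [div_le_div_iff₀ htd (by positivity)]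
      linarith
    have h9 : (1:ℝ) ≤ 5 / (2 * u) := by
      rw [le_div_iff₀ (by positivity)]
      linarith
    have h10 : 1 / (2 * u) + 5 / (2 * u) = 3 / u := by
      field_simp
      ring
    linarith
  -- conclude
  intro n
  have hexp : Real.exp (2 * (n : ℝ) * u) = t ^ n := by
    rw [show (2 : ℝ) * n * u = n * (2 * u) by ring, Real.exp_nat_mul, htdef]
  have htn : (0:ℝ) < t ^ n := pow_pos ht0 n
  have htin : (0:ℝ) < (t⁻¹) ^ n := pow_pos htinv0 n
  calc P n ≤ A * t ^ n + B * (t⁻¹) ^ n := hAB n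
    _ ≤ A * t ^ n := by
        have := mul_nonpos_of_nonpos_of_nonneg hBneg htin.le
        linarith
    _ ≤ (3 / u) * t ^ n := mul_le_mul_of_nonneg_right hAbound htn.le
    _ = 3 / u * Real.exp (2 * n * u) := by rw [hexp]
end
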